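/- arXiv:1207.7336 — 4 statements merged into one kernel-verified Lean document; each statement's English description precedes it below -/
import Mathlib

section
/- Let r > 1 and 0 < δ₀ < 1/2. Set B = 5(1+δ₀)r² + 8(1/2−δ₀)(r+1) + 8(8/3)^r(1+δ₀), k = (B + √(B² − 160(1+δ₀)(1/2−δ₀)r²(r+1)))/(10r(r+1)), and k₂ = 8k(1+δ₀)/((r+1)(5kr − 8(1/2−δ₀))). Then k − r/(r+1) − k₂·(8/3)^r = δ₀·r/(r+1). -/
/-!
The number `k` is the larger root of `5r(r+1)k² - Bk + 8(1+δ₀)(1/2-δ₀)r = 0`, and substituting the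
value of `B` turns this quadratic relation into
`(k(r+1) - (1+δ₀)r)(5kr - 8(1/2-δ₀)) = 8k(1+δ₀)(8/3)^r`, which is the identity after division.
The denominator is positive because the quadratic is negative at `8(1/2-δ₀)/(5r)`, so this point
lies below the larger root.
-/

open Real

section Quadratic

variable {a b c x : ℝ}

lemma quadratic_eq_zero_of_eq_add_sqrt_discrim (ha : a ≠ 0) (hd : 0 ≤ discrim a b c)
    (hx : x = (-b + √(discrim a b c)) / (2 * a)) : a * (x * x) + b * x + c = 0 :=
  (quadratic_eq_zero_iff ha (mul_self_sqrt hd).symm x).2 (Or.inl hx)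

lemma sq_lt_discrim_of_quadratic_neg (ha : 0 < a) (hx : a * (x * x) + b * x + c < 0) :
    (2 * a * x + b) ^ 2 < discrim a b c := by
  rw [discrim]
  nlinarith

lemma lt_add_sqrt_discrim_div_of_quadratic_neg (ha : 0 < a) (hx : a * (x * x) + b * x + c < 0) :
    x < (-b + √(discrim a b c)) / (2 * a) := by
  rw [lt_div_iff₀ (by positivity)]
  linarith [lt_sqrt_of_sq_lt (sq_lt_discrim_of_quadratic_neg ha hx)]

end Quadratic

lemma damping_identity_of_quadratic {r δ₀ P B k : ℝ} (hr : r + 1 ≠ 0)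
    (hden : 5 * k * r - 8 * (1/2 - δ₀) ≠ 0)
    (hB : B = 5 * (1 + δ₀) * r ^ 2 + 8 * (1/2 - δ₀) * (r + 1) + 8 * P * (1 + δ₀))
    (hk : 5 * r * (r + 1) * (k * k) + -B * k + 8 * (1 + δ₀) * (1/2 - δ₀) * r = 0) :
    k - r / (r + 1) - 8 * k * (1 + δ₀) / ((r + 1) * (5 * k * r - 8 * (1/2 - δ₀))) * P
      = δ₀ * r / (r + 1) := by
  have hfactored : (k * (r + 1) - (1 + δ₀) * r) * (5 * k * r - 8 * (1/2 - δ₀)) = 8 * k * (1 + δ₀) * P := by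
    linear_combination hk + k * hB
  have hcoeff : 8 * k * (1 + δ₀) / ((r + 1) * (5 * k * r - 8 * (1/2 - δ₀))) * P
      = (k * (r + 1) - (1 + δ₀) * r) / (r + 1) := by
    rw [div_mul_eq_mul_div, div_eq_div_iff (mul_ne_zero hr hden) hr]
    linear_combination -(r + 1) * hfactored
  rw [hcoeff]
  field_simp
  ring

lemma damping_quadratic_neg {r δ₀ P B : ℝ} (hr : 0 < r) (hδ₀ : 0 < 1 + δ₀) (hδ₀' : 0 < 1/2 - δ₀)
    (hP : 0 < P) (hB : B = 5 * (1 + δ₀) * r ^ 2 + 8 * (1/2 - δ₀) * (r + 1) + 8 * P * (1 + δ₀)) :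
    5 * r * (r + 1) * (8 * (1/2 - δ₀) / (5 * r) * (8 * (1/2 - δ₀) / (5 * r)))
      + -B * (8 * (1/2 - δ₀) / (5 * r)) + 8 * (1 + δ₀) * (1/2 - δ₀) * r < 0 := by
  have hval : 5 * r * (r + 1) * (8 * (1/2 - δ₀) / (5 * r) * (8 * (1/2 - δ₀) / (5 * r)))
      + -B * (8 * (1/2 - δ₀) / (5 * r)) + 8 * (1 + δ₀) * (1/2 - δ₀) * r
      = -(8 * (1/2 - δ₀) / (5 * r) * (8 * P * (1 + δ₀))) := by
    rw [hB]
    field_simp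
    ring
  have : 0 < 8 * (1/2 - δ₀) / (5 * r) * (8 * P * (1 + δ₀)) := by positivity
  linarith

/-- The damping coefficient identity in the proof of Theorem 2. -/
theorem stmt_3 (r δ₀ B k k₂ : ℝ) (hr : 1 < r) (hδ₀ : 0 < δ₀) (hδ₀' : δ₀ < 1/2)
    (hB : B = 5*(1+δ₀)*r^2 + 8*(1/2-δ₀)*(r+1) + 8*((8/3:ℝ)^r)*(1+δ₀))
    (hk : k = (B + Real.sqrt (B^2 - 160*(1+δ₀)*(1/2-δ₀)*r^2*(r+1))) / (10*r*(r+1)))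
    (hk₂ : k₂ = 8*k*(1+δ₀) / ((r+1)*(5*k*r - 8*(1/2-δ₀)))) :
    k - r/(r+1) - k₂*((8/3:ℝ)^r) = δ₀*r/(r+1) := by
  set P := (8/3 : ℝ) ^ r
  have hr₀ : 0 < r := by linarith
  have hA : 0 < 5 * r * (r + 1) := by positivity
  have hneg := damping_quadratic_neg hr₀ (by linarith) (by linarith)
    (rpow_pos_of_pos (by norm_num) r) hB
  have hk' : k = (-(-B) + √(discrim (5 * r * (r + 1)) (-B) (8 * (1 + δ₀) * (1/2 - δ₀) * r)))
      / (2 * (5 * r * (r + 1))) := by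
    rw [hk, neg_neg, discrim]
    ring_nf
  have hdisc := (sq_nonneg _).trans (sq_lt_discrim_of_quadratic_neg hA hneg).le
  have hk_gt := lt_add_sqrt_discrim_div_of_quadratic_neg hA hneg
  rw [← hk', div_lt_iff₀ (by positivity)] at hk_gt
  rw [hk₂]
  exact damping_identity_of_quadratic (by positivity) (by linarith) hB
    (quadratic_eq_zero_of_eq_add_sqrt_discrim hA.ne' hdisc hk')
end

section
/- Let r > 1 and 0 < δ₀ < 1/2. Set B = 5(1+δ₀)r² + 8(1/2−δ₀)(r+1) + 8(8/3)^r(1+δ₀), k = (B + √(B² − 160(1+δ₀)(1/2−δ₀)r²(r+1)))/(10r(r+1)), and k₂ = 8k(1+δ₀)/((r+1)(5kr − 8(1/2−δ₀))). Then for every real β with 0 < β + 1 ≤ (1/2 − δ₀)/k, one has k₂·(5r/8 − (β+1)) − 1/(r+1) ≥ δ₀/(r+1). -/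
/-! `k₂` is chosen so that at the endpoint `β + 1 = (1/2 - δ₀)/k` the quantity `k₂ (5r/8 - (β+1))`
equals `(1 + δ₀)/(r + 1)` exactly; as `k₂ > 0` the quantity only grows as `β + 1` decreases.
Positivity of `k₂`, i.e. `5kr > 8(1/2 - δ₀)`, holds because dropping the square root gives
`k ≥ B/(10r(r+1))`, and `B > 16(1/2 - δ₀)(r+1)` since `(8/3)^r ≥ 8/3`. -/

open Real

lemma mul_sub_div_eq_div {r c a k : ℝ} (hr : r + 1 ≠ 0) (hk : k ≠ 0) (hkr : 5*k*r - 8*c ≠ 0) :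
    8*k*a / ((r+1)*(5*k*r - 8*c)) * (5*r/8 - c/k) = a/(r+1) := by
  have hsub : 5*r/8 - c/k = (5*k*r - 8*c) / (8*k) := by
    field_simp
  rw [hsub, div_mul_div_comm,
    div_eq_div_iff (mul_ne_zero (mul_ne_zero hr hkr) (mul_ne_zero (by norm_num) hk)) hr]
  ring

lemma div_le_mul_sub_of_le_div {r c a k x : ℝ} (hr : 0 < r + 1) (hk : 0 < k) (ha : 0 ≤ a)
    (hkr : 8*c < 5*k*r) (hx : x ≤ c/k) :
    a/(r+1) ≤ 8*k*a / ((r+1)*(5*k*r - 8*c)) * (5*r/8 - x) := by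
  have hkr' : 0 < 5*k*r - 8*c := by linarith
  calc a/(r+1) = 8*k*a / ((r+1)*(5*k*r - 8*c)) * (5*r/8 - c/k) :=
        (mul_sub_div_eq_div hr.ne' hk.ne' hkr'.ne').symm
    _ ≤ 8*k*a / ((r+1)*(5*k*r - 8*c)) * (5*r/8 - x) := by gcongr

lemma lt_five_mul_root_mul {r c B D : ℝ} (hr : 0 < r) (hB : 16*c*(r+1) < B) :
    8*c < 5 * ((B + √D) / (10*r*(r+1))) * r := by
  have hroot : 5 * ((B + √D) / (10*r*(r+1))) * r = (B + √D) / (2*(r+1)) := by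
    field_simp
    ring
  rw [hroot, lt_div_iff₀ (by positivity)]
  nlinarith [sqrt_nonneg D]

section coefficientB

variable {r δ₀ M : ℝ} (hr : 1 < r) (hδ₀ : 0 ≤ δ₀) (hM : 8/3 ≤ M)
include hr hδ₀ hM

lemma coefficientB_pos : 0 < 5*(1+δ₀)*r^2 + 8*(1/2-δ₀)*(r+1) + 8*M*(1+δ₀) := by
  nlinarith [sq_nonneg (r - 4/5), mul_nonneg hδ₀ (sq_nonneg (r - 4/5))]

lemma lt_coefficientB :
    16*(1/2-δ₀)*(r+1) < 5*(1+δ₀)*r^2 + 8*(1/2-δ₀)*(r+1) + 8*M*(1+δ₀) := by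
  nlinarith [mul_nonneg hδ₀ (sq_nonneg r)]

end coefficientB

theorem stmt_5_general (r δ₀ B k k₂ : ℝ) (hr : 1 < r) (hδ₀ : 0 < δ₀)
    (hB : B = 5*(1+δ₀)*r^2 + 8*(1/2-δ₀)*(r+1) + 8*((8/3:ℝ)^r)*(1+δ₀))
    (hk : k = (B + Real.sqrt (B^2 - 160*(1+δ₀)*(1/2-δ₀)*r^2*(r+1))) / (10*r*(r+1)))
    (hk₂ : k₂ = 8*k*(1+δ₀) / ((r+1)*(5*k*r - 8*(1/2-δ₀)))) :
    ∀ β : ℝ, 0 < β + 1 → β + 1 ≤ (1/2 - δ₀)/k →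
      k₂*(5*r/8 - (β+1)) - 1/(r+1) ≥ δ₀/(r+1) := by
  intro β _ hβ
  have hM : (8/3 : ℝ) ≤ (8/3 : ℝ)^r := by
    simpa using rpow_le_rpow_of_exponent_le (by norm_num : (1:ℝ) ≤ 8/3) hr.le
  have hBpos : 0 < B := hB ▸ coefficientB_pos hr hδ₀.le hM
  have hkpos : 0 < k := hk ▸ div_pos (by positivity) (by positivity)
  have hkr : 8*(1/2-δ₀) < 5*k*r :=
    hk ▸ lt_five_mul_root_mul (by linarith) (hB ▸ lt_coefficientB hr hδ₀.le hM)
  have hbound := div_le_mul_sub_of_le_div (a := 1 + δ₀) (by linarith) hkpos (by linarith) hkr hβ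
  rw [← hk₂, add_div] at hbound
  linarith

/-- Lower bound on the coefficient of the weighted potential-energy term in
Lemma 4.2 of the paper. -/
theorem stmt_5 (r δ₀ B k k₂ : ℝ) (hr : 1 < r) (hδ₀ : 0 < δ₀) (hδ₀' : δ₀ < 1/2)
    (hB : B = 5*(1+δ₀)*r^2 + 8*(1/2-δ₀)*(r+1) + 8*((8/3:ℝ)^r)*(1+δ₀))
    (hk : k = (B + Real.sqrt (B^2 - 160*(1+δ₀)*(1/2-δ₀)*r^2*(r+1))) / (10*r*(r+1)))
    (hk₂ : k₂ = 8*k*(1+δ₀) / ((r+1)*(5*k*r - 8*(1/2-δ₀)))) :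
    ∀ β : ℝ, 0 < β + 1 → β + 1 ≤ (1/2 - δ₀)/k →
      k₂*(5*r/8 - (β+1)) - 1/(r+1) ≥ δ₀/(r+1) :=
  stmt_5_general r δ₀ B k k₂ hr hδ₀ hB hk hk₂
end

section
/- Let β ∈ ℝ and b > 1 with log b ≥ 3|β| + 2, and define f(s) = (log(b+s))^β/(b+s) for s ≥ 0. Then for every s ≥ 0 the second derivative of f at s satisfies f''(s) ≤ 4·(log(b+s))^β/(b+s)³. -/
/-!
Writing `x = b + s` and `L = log x`, one computes
`f'' = L ^ (β - 2) * (β * (β - 1) - 3 * β * L + 2 * L ^ 2) / x ^ 3`,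
so the claim reduces to the polynomial inequality `β * (β - 1) - 3 * β * L ≤ 2 * L ^ 2`,
which holds once `|β| ≤ (L - 2) / 3`.
-/

open Real Filter Topology

theorem hasDerivAt_log_rpow (p : ℝ) {x : ℝ} (hx : 1 < x) :
    HasDerivAt (fun x => log x ^ p) (p * log x ^ (p - 1) / x) x := by
  refine ((hasDerivAt_log (by linarith)).rpow_const (Or.inl (log_pos hx).ne')).congr_deriv ?_
  field_simp

namespace LogRpowDiv

variable (β : ℝ) {x : ℝ}

theorem hasDerivAt (hx : 1 < x) :
    HasDerivAt (fun x => log x ^ β / x)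
      ((β * log x ^ (β - 1) - log x ^ β) / x ^ 2) x := by
  have hx0 : x ≠ 0 := by linarith
  refine ((hasDerivAt_log_rpow β hx).div (hasDerivAt_id' x) hx0).congr_deriv ?_
  field_simp

theorem deriv_eventuallyEq (hx : 1 < x) :
    deriv (fun x => log x ^ β / x)
      =ᶠ[𝓝 x] fun x => (β * log x ^ (β - 1) - log x ^ β) / x ^ 2 := by
  filter_upwards [Ioi_mem_nhds hx] with y hy
  exact (hasDerivAt β hy).deriv

theorem hasDerivAt_deriv (hx : 1 < x) :
    HasDerivAt (deriv fun x => log x ^ β / x)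
      (log x ^ (β - 2) * (β * (β - 1) - 3 * β * log x + 2 * log x ^ 2) / x ^ 3) x := by
  have hx0 : x ≠ 0 := by linarith
  have hL : 0 < log x := log_pos hx
  have hnum : HasDerivAt (fun x => β * log x ^ (β - 1) - log x ^ β)
      (β * ((β - 1) * log x ^ (β - 1 - 1) / x) - β * log x ^ (β - 1) / x) x :=
    ((hasDerivAt_log_rpow (β - 1) hx).const_mul β).sub (hasDerivAt_log_rpow β hx)
  have hden : HasDerivAt (fun x => x ^ 2) (2 * x) x := by
    simpa using hasDerivAt_pow 2 x
  refine ((hnum.div hden (pow_ne_zero 2 hx0)).congr_of_eventuallyEq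
    (deriv_eventuallyEq β hx)).congr_deriv ?_
  simp only [sub_sub, one_add_one_eq_two, rpow_sub hL, rpow_one, rpow_two]
  field_simp
  ring

end LogRpowDiv

theorem mul_sub_one_sub_le_of_three_abs_add_two_le {β L : ℝ} (h : 3 * |β| + 2 ≤ L) :
    β * (β - 1) - 3 * β * L ≤ 2 * L ^ 2 := by
  nlinarith [abs_nonneg β, sq_abs β, le_abs_self β, neg_abs_le β]

/-- Upper bound for the second derivative of `f(s) = (log (b+s))^β / (b+s)`. -/
theorem stmt_8 (β b : ℝ) (hb : 1 < b) (hlogb : 3 * |β| + 2 ≤ Real.log b) :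
    ∀ s : ℝ, 0 ≤ s →
      deriv (deriv (fun s : ℝ => (Real.log (b + s)) ^ β / (b + s))) s
        ≤ 4 * (Real.log (b + s)) ^ β / (b + s) ^ 3 := by
  intro s hs
  have hx : 1 < b + s := by linarith
  have hL : 0 < log (b + s) := log_pos hx
  have hlog : 3 * |β| + 2 ≤ log (b + s) := hlogb.trans (log_le_log (by linarith) (by linarith))
  have hshift : deriv (fun s => log (b + s) ^ β / (b + s))
      = fun s => deriv (fun x => log x ^ β / x) (b + s) :=
    funext fun s => deriv_comp_const_add (fun x => log x ^ β / x) b s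
  rw [hshift, deriv_comp_const_add (deriv fun x => log x ^ β / x),
    (LogRpowDiv.hasDerivAt_deriv β hx).deriv]
  have hpow : log (b + s) ^ β = log (b + s) ^ (β - 2) * log (b + s) ^ 2 := by
    rw [rpow_sub hL, rpow_two, div_mul_cancel₀ _ (by positivity)]
  rw [hpow, mul_left_comm]
  gcongr
  linarith [mul_sub_one_sub_le_of_three_abs_add_two_le hlog]
end

section
/- Let d ≥ 1 be a natural number, let f : ℝ → ℝ be twice continuously differentiable, and let t ∈ ℝ. Define F : EuclideanSpace ℝ (Fin d) → ℝ by F(x) = f(√(1+‖x‖²) + t). Then for every x, writing q = √(1+‖x‖²), the Laplacian of F at x equals f''(q+t)·(‖x‖²/q²) + f'(q+t)·(d/q − ‖x‖²/q³). -/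
/-!
With `q y = √(1 + ‖y‖²)` one has `∇q = y / q`, so the directional derivative of `g ∘ q` along `v`
is `g'(q) ⟪y, v⟫ / q`. Differentiating once more along `v` gives
`g''(q) (⟪x, v⟫ / q)² + g'(q) (‖v‖² / q - ⟪x, v⟫² / q³)`, and summing over an orthonormal basis
turns `⟪x, bᵢ⟫²` into `‖x‖²` (Parseval) and `‖bᵢ‖²` into `1`. The shift by `t` is absorbed into `g`.
-/

open RealInnerProductSpace

variable {E : Type*} [NormedAddCommGroup E] [InnerProductSpace ℝ E]

theorem hasFDerivAt_sqrt_one_add_norm_sq (x : E) :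
    HasFDerivAt (fun y : E => √(1 + ‖y‖ ^ 2)) ((√(1 + ‖x‖ ^ 2))⁻¹ • innerSL ℝ x) x := by
  have h := (((hasFDerivAt_id x).norm_sq).const_add 1).sqrt (by positivity)
  simp only [id, ContinuousLinearMap.comp_id, smul_smul, ← Nat.cast_smul_eq_nsmul ℝ] at h
  convert h using 2
  field_simp
  norm_num

theorem fderiv_comp_sqrt_one_add_norm_sq_apply {g : ℝ → ℝ} (hg : Differentiable ℝ g) (x v : E) :
    fderiv ℝ (fun y : E => g √(1 + ‖y‖ ^ 2)) x v
      = deriv g √(1 + ‖x‖ ^ 2) * ((√(1 + ‖x‖ ^ 2))⁻¹ * ⟪x, v⟫) := by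
  have h : HasFDerivAt (fun y : E => g √(1 + ‖y‖ ^ 2)) _ x :=
    (hg _).hasDerivAt.comp_hasFDerivAt x (hasFDerivAt_sqrt_one_add_norm_sq x)
  simp [h.fderiv]

theorem fderiv_fderiv_comp_sqrt_one_add_norm_sq_apply {g : ℝ → ℝ} (hg : Differentiable ℝ g)
    (x v : E) (hg' : DifferentiableAt ℝ (deriv g) √(1 + ‖x‖ ^ 2)) :
    fderiv ℝ (fun y => fderiv ℝ (fun y : E => g √(1 + ‖y‖ ^ 2)) y v) x v
      = deriv (deriv g) √(1 + ‖x‖ ^ 2) * (⟪x, v⟫ / √(1 + ‖x‖ ^ 2)) ^ 2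
        + deriv g √(1 + ‖x‖ ^ 2)
          * (‖v‖ ^ 2 / √(1 + ‖x‖ ^ 2) - ⟪x, v⟫ ^ 2 / √(1 + ‖x‖ ^ 2) ^ 3) := by
  simp_rw [fderiv_comp_sqrt_one_add_norm_sq_apply hg]
  have hq_pos : 0 < √(1 + ‖x‖ ^ 2) := Real.sqrt_pos.2 (by positivity)
  have hq := hasFDerivAt_sqrt_one_add_norm_sq x
  have h_deriv_g : HasFDerivAt (fun y : E => deriv g √(1 + ‖y‖ ^ 2))
      (deriv (deriv g) √(1 + ‖x‖ ^ 2) • (√(1 + ‖x‖ ^ 2))⁻¹ • innerSL ℝ x) x := by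
    exact hg'.hasDerivAt.comp_hasFDerivAt x hq
  have h_inv_q : HasFDerivAt (fun y : E => (√(1 + ‖y‖ ^ 2))⁻¹) _ x :=
    (hasDerivAt_inv hq_pos.ne').comp_hasFDerivAt x hq
  have h_inner : HasFDerivAt (fun y : E => ⟪y, v⟫) (innerSL ℝ v) x := by
    convert (innerSL ℝ v).hasFDerivAt using 2 with y
    exact real_inner_comm _ _
  have h_prod : HasFDerivAt
      (fun y : E => deriv g √(1 + ‖y‖ ^ 2) * ((√(1 + ‖y‖ ^ 2))⁻¹ * ⟪y, v⟫)) _ x :=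
    h_deriv_g.mul (h_inv_q.mul h_inner)
  rw [h_prod.fderiv]
  simp only [neg_smul, smul_neg, smul_add, add_apply, smul_apply, coe_innerSL_apply,
    real_inner_self_eq_norm_sq, smul_eq_mul, neg_apply]
  field_simp
  ring

theorem sum_fderiv_fderiv_comp_sqrt_one_add_norm_sq {ι : Type*} [Fintype ι]
    (b : OrthonormalBasis ι ℝ E) {g : ℝ → ℝ} (hg : Differentiable ℝ g) (x : E)
    (hg' : DifferentiableAt ℝ (deriv g) √(1 + ‖x‖ ^ 2)) :
    ∑ i, fderiv ℝ (fun y => fderiv ℝ (fun y : E => g √(1 + ‖y‖ ^ 2)) y (b i)) x (b i)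
      = deriv (deriv g) √(1 + ‖x‖ ^ 2) * (‖x‖ ^ 2 / √(1 + ‖x‖ ^ 2) ^ 2)
        + deriv g √(1 + ‖x‖ ^ 2)
          * (Fintype.card ι / √(1 + ‖x‖ ^ 2) - ‖x‖ ^ 2 / √(1 + ‖x‖ ^ 2) ^ 3) := by
  have parseval : ∑ i, ⟪x, b i⟫ ^ 2 = ‖x‖ ^ 2 := by
    simpa [sq, real_inner_comm x, real_inner_self_eq_norm_sq] using b.sum_inner_mul_inner x x
  simp_rw [fderiv_fderiv_comp_sqrt_one_add_norm_sq_apply hg x _ hg', b.norm_eq_one,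
    Finset.sum_add_distrib, ← Finset.mul_sum, div_pow, ← Finset.sum_div, parseval,
    Finset.sum_sub_distrib, ← Finset.sum_div, parseval]
  simp

theorem stmt_12_general (d : ℕ) (f : ℝ → ℝ) (hf : ContDiff ℝ 2 f) (t : ℝ)
    (F : EuclideanSpace ℝ (Fin d) → ℝ)
    (hF : ∀ x, F x = f (Real.sqrt (1 + ‖x‖ ^ 2) + t)) :
    ∀ x : EuclideanSpace ℝ (Fin d),
      (∑ i : Fin d,
        fderiv ℝ (fun y => fderiv ℝ F y (EuclideanSpace.single i (1:ℝ))) x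
          (EuclideanSpace.single i (1:ℝ)))
      = deriv (deriv f) (Real.sqrt (1 + ‖x‖ ^ 2) + t)
          * (‖x‖ ^ 2 / (Real.sqrt (1 + ‖x‖ ^ 2)) ^ 2)
        + deriv f (Real.sqrt (1 + ‖x‖ ^ 2) + t)
          * ((d : ℝ) / Real.sqrt (1 + ‖x‖ ^ 2)
              - ‖x‖ ^ 2 / (Real.sqrt (1 + ‖x‖ ^ 2)) ^ 3) := by
  intro x
  have hf' : ContDiff ℝ 1 (deriv f) := hf.iterate_deriv' 1 1
  have hg : Differentiable ℝ (fun s => f (s + t)) :=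
    (hf.differentiable two_ne_zero).comp (differentiable_id.add_const t)
  have hg_deriv : deriv (fun s => f (s + t)) = fun s => deriv f (s + t) :=
    funext fun s => deriv_comp_add_const f t s
  have hg' : DifferentiableAt ℝ (deriv fun s => f (s + t)) √(1 + ‖x‖ ^ 2) := by
    rw [hg_deriv]
    exact ((hf'.differentiable one_ne_zero).comp (differentiable_id.add_const t)) _
  have key :=
    sum_fderiv_fderiv_comp_sqrt_one_add_norm_sq (EuclideanSpace.basisFun (Fin d) ℝ) hg x hg'
  simp only [EuclideanSpace.basisFun_apply, hg_deriv, deriv_comp_add_const,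
    Fintype.card_fin] at key
  rw [← key, funext hF]

/-- The Laplacian (sum of second partial derivatives with respect to the
standard orthonormal basis) of `F(x) = f(√(1+‖x‖²) + t)` on `ℝ^d`. -/
theorem stmt_12 (d : ℕ) (hd : 1 ≤ d) (f : ℝ → ℝ) (hf : ContDiff ℝ 2 f) (t : ℝ)
    (F : EuclideanSpace ℝ (Fin d) → ℝ)
    (hF : ∀ x, F x = f (Real.sqrt (1 + ‖x‖ ^ 2) + t)) :
    ∀ x : EuclideanSpace ℝ (Fin d),
      (∑ i : Fin d,
        fderiv ℝ (fun y => fderiv ℝ F y (EuclideanSpace.single i (1:ℝ))) x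
          (EuclideanSpace.single i (1:ℝ)))
      = deriv (deriv f) (Real.sqrt (1 + ‖x‖ ^ 2) + t)
          * (‖x‖ ^ 2 / (Real.sqrt (1 + ‖x‖ ^ 2)) ^ 2)
        + deriv f (Real.sqrt (1 + ‖x‖ ^ 2) + t)
          * ((d : ℝ) / Real.sqrt (1 + ‖x‖ ^ 2)
              - ‖x‖ ^ 2 / (Real.sqrt (1 + ‖x‖ ^ 2)) ^ 3) :=
  stmt_12_general d f hf t F hF
end
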